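/- arXiv:math/9910028 — 3 statements merged into one kernel-verified Lean document; each statement's English description precedes it below -/
import Mathlib

section
/- Let W = ⊕_{(s,t)∈ℕ×ℕ} W_{s,t} be a bigraded vector space over a field K of characteristic zero, with every W_{s,t} finite-dimensional and all but finitely many zero, set h^{s,t} = dim W_{s,t}, and let k ∈ ℕ. For n ∈ ℕ define the bigraded vector space F_n(W,k) = ⊕_N ⊗_{l≥1} S^{N_l}(W[k(l-1), k(l-1)]), the sum over all finitely supported functions N : {1,2,3,…} → ℕ with ∑_l l·N_l = n. Then in ℤ[[x,y,q]] one has ∑_{n≥0} h_{x,y}(F_n(W,k)) q^n = ∏_{l≥1} [ ∏_{s+t odd} (1 + x^{s+k(l-1)} y^{t+k(l-1)} q^l)^{h^{s,t}} / ∏_{s+t even} (1 - x^{s+k(l-1)} y^{t+k(l-1)} q^l)^{h^{s,t}} ]. (For W = H^{*,*}(X) of a closed complex manifold X of complex dimension 2k, F_n(W,k) is the delocalized equivariant Dolbeault cohomology H^{*,*}(X^n,S_n) with the physicists' shifted bigrading.) -/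
/-!
STATEMENT 5.  A bigraded vector space `W` over a field of characteristic zero
with finite-dimensional components, almost all zero, is recorded by its
dimension function `h : ℕ × ℕ →₀ ℕ`, `h (s,t) = dim W_{s,t}`; let `k : ℕ`.

For `n : ℕ` we consider `F_n(W,k) = ⊕_N ⊗_{l≥1} S^{N_l}(W[k(l-1),k(l-1)])`,
the sum over finitely supported `N : {1,2,…} → ℕ` with `∑_l l·N_l = n`, where
`S` is the graded symmetric power (parity by total degree) and `W[a,b]` the
shift; tensor products are bigraded by componentwise sums.  A basis of
`F_n(W,k)` is given by the finitely supported multiplicity functions `M` on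
`{1,2,…} × (basis of W)` — a pair `(l,w)` indexing the basis vector `w` of the
`l`-th factor, of bidegree `(s + k(l-1), t + k(l-1))` for `w` of bidegree
`(s,t)` — such that pairs of odd total degree get multiplicity `≤ 1` and
`∑ l·M(l,w) = n`; bidegrees add.  `fDim2 h k n e` below counts such `M` of
total bidegree `e`, i.e. it is `dim F_n(W,k)_e`; in the encoding the first
component `v.1 : ℕ` of an index stands for `l - 1`.

The theorem states, in `ℤ[[x,y,q]]` (`x = X 0`, `y = X 1`, `q = X 2`), the
identity
`∑_{n≥0} h_{x,y}(F_n(W,k)) q^n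
  = ∏_{l≥1} [∏_{s+t odd} (1 + x^{s+k(l-1)} y^{t+k(l-1)} q^l)^{h^{s,t}}
             / ∏_{s+t even} (1 - x^{s+k(l-1)} y^{t+k(l-1)} q^l)^{h^{s,t}}]`.
The infinite product over `l ≥ 1` converges `q`-adically (the `l`-th factor is
`≡ 1 mod q^l`), so the identity is expressed coefficientwise: at any exponent
`E`, the coefficient of the left-hand side equals that of the finite product
of the factors with `1 ≤ l ≤ E(q)`.  Divisions are by units of `ℤ[[x,y,q]]`,
interpreted via `Ring.inverse`.
-/

open PowerSeries Finset

/-- `fDim2 h k n e` is the dimension of the bidegree-`e` component of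
`F_n(W,k) = ⊕_{∑ l N_l = n} ⊗_{l≥1} S^{N_l}(W[k(l-1),k(l-1)])` where `dim W_p = h p`. -/
noncomputable def fDim2 (h : ℕ × ℕ →₀ ℕ) (k n : ℕ) (e : ℕ × ℕ) : ℕ :=
  Nat.card {M : (ℕ × Σ p : ℕ × ℕ, Fin (h p)) →₀ ℕ //
    (∀ v, Odd (v.2.1.1 + v.2.1.2) → M v ≤ 1) ∧
      (M.sum fun v j => (v.1 + 1) * j) = n ∧
      (M.sum fun v j => j • (v.2.1 + (k * v.1, k * v.1))) = e}

/-- The `l`-th factor of the right-hand side. -/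
noncomputable def rhsFactor2 (h : ℕ × ℕ →₀ ℕ) (k l : ℕ) : MvPowerSeries (Fin 3) ℤ :=
  (∏ p ∈ h.support.filter (fun p => Odd (p.1 + p.2)),
      (1 + (MvPowerSeries.X 0 : MvPowerSeries (Fin 3) ℤ) ^ (p.1 + k * (l - 1)) *
        MvPowerSeries.X 1 ^ (p.2 + k * (l - 1)) * MvPowerSeries.X 2 ^ l) ^ (h p)) *
    Ring.inverse (∏ p ∈ h.support.filter (fun p => Even (p.1 + p.2)),
      (1 - (MvPowerSeries.X 0 : MvPowerSeries (Fin 3) ℤ) ^ (p.1 + k * (l - 1)) *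
        MvPowerSeries.X 1 ^ (p.2 + k * (l - 1)) * MvPowerSeries.X 2 ^ l) ^ (h p))


/-!
Each factor of the right-hand side is a product, over the basis vectors `w` of `W` of bidegree
`(s,t)`, of the series `∑_{j ∈ J} m^j` with `m = x^{s+k(l-1)} y^{t+k(l-1)} q^l`: for `s + t` odd
this is `1 + m` (`J = {0,1}`), for `s + t` even it is the geometric series `(1 - m)⁻¹`
(`J = ℕ`). Multiplying out the finite product over the levels `l ≤ n` and the basis, the
coefficient of `x^a y^b q^n` counts the choices of exponents `j_{l,w} ∈ J` whose monomials
multiply to `x^a y^b q^n`, i.e. exactly the multiplicity functions counted by `fDim2`; levels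
`l > n` cannot contribute because `q^l` already exceeds `q^n`.
-/

theorem exists_eq_nsmul_iff {α : Type*} [AddCommMonoid α] [PartialOrder α]
    [CanonicallyOrderedAdd α] [Sub α] [OrderedSub α] [AddLeftReflectLE α] {d e : α} :
    (∃ j : ℕ, e = j • d) ↔ e = 0 ∨ d ≤ e ∧ ∃ j : ℕ, e - d = j • d := by
  constructor
  · rintro ⟨_ | j, rfl⟩
    · simp
    · exact Or.inr ⟨by simp [succ_nsmul], j, by simp [succ_nsmul]⟩
  · rintro (rfl | ⟨hde, j, hj⟩)
    · exact ⟨0, by simp⟩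
    · exact ⟨j + 1, by rw [succ_nsmul, ← hj, tsub_add_cancel_of_le hde]⟩

theorem Ring.inverse_eq_of_mul_eq_one {M₀ : Type*} [CommMonoidWithZero M₀] {a b : M₀}
    (hab : a * b = 1) : Ring.inverse a = b := by
  simpa using (Ring.inverse_mul_eq_iff_eq_mul a 1 b (IsUnit.of_mul_eq_one b hab)).2 hab.symm

namespace MvPowerSeries

variable {σ R ι : Type*}

open scoped Classical in
noncomputable def multiplesSeries [Semiring R] (J : Set ℕ) (d : σ →₀ ℕ) : MvPowerSeries σ R :=
  fun e => if ∃ j ∈ J, e = j • d then 1 else 0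

open scoped Classical in
theorem coeff_multiplesSeries [Semiring R] (J : Set ℕ) (d e : σ →₀ ℕ) :
    coeff e (multiplesSeries J d : MvPowerSeries σ R) = if ∃ j ∈ J, e = j • d then 1 else 0 :=
  rfl

theorem one_add_monomial_eq_multiplesSeries [Semiring R] {d : σ →₀ ℕ} (hd : d ≠ 0) :
    1 + monomial d (1 : R) = multiplesSeries (Set.Iic 1) d := by
  classical
  ext e
  have hJ : (∃ j ∈ Set.Iic 1, e = j • d) ↔ e = 0 ∨ e = d := by
    simp only [Set.mem_Iic, Nat.le_one_iff_eq_zero_or_eq_one]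
    constructor
    · rintro ⟨j, rfl | rfl, rfl⟩ <;> simp
    · rintro (rfl | rfl)
      exacts [⟨0, by simp⟩, ⟨1, by simp⟩]
  rw [coeff_multiplesSeries, map_add, coeff_one, coeff_monomial, hJ]
  by_cases he : e = 0
  · subst he
    simp [Ne.symm hd]
  · simp [he]

theorem one_sub_monomial_mul_multiplesSeries_univ [Ring R] {d : σ →₀ ℕ} (hd : d ≠ 0) :
    (1 - monomial d (1 : R)) * multiplesSeries Set.univ d = 1 := by
  classical
  ext e
  rw [sub_mul, one_mul, map_sub, coeff_monomial_mul, coeff_multiplesSeries,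
    coeff_multiplesSeries, coeff_one]
  simp only [Set.mem_univ, true_and, one_mul]
  by_cases he : e = 0
  · subst he
    simp [hd, show ∃ j : ℕ, (0 : σ →₀ ℕ) = j • d from ⟨0, by simp⟩]
  · simp only [exists_eq_nsmul_iff (e := e), he, false_or, if_false]
    split_ifs <;> simp_all

noncomputable def nsmulFamily (d : ι → σ →₀ ℕ) (M : ι →₀ ℕ) : ι →₀ (σ →₀ ℕ) :=
  Finsupp.onFinset M.support (fun v => M v • d v) fun v hv =>
    Finsupp.mem_support_iff.mpr fun hM => hv (by rw [hM, zero_smul])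

@[simp]
theorem nsmulFamily_apply (d : ι → σ →₀ ℕ) (M : ι →₀ ℕ) (v : ι) :
    nsmulFamily d M v = M v • d v :=
  rfl

section Decompositions

variable {s : Finset ι} {J : ι → Set ℕ} {d : ι → σ →₀ ℕ} {E : σ →₀ ℕ}

open scoped Classical in
noncomputable def multiplesDecompositions (s : Finset ι) (J : ι → Set ℕ) (d : ι → σ →₀ ℕ)
    (E : σ →₀ ℕ) : Finset (ι →₀ σ →₀ ℕ) :=
  {u ∈ finsuppAntidiag s E | ∀ v ∈ s, ∃ j ∈ J v, u v = j • d v}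

theorem sum_nsmulFamily_of_support_subset {M : ι →₀ ℕ} (hM : M.support ⊆ s) :
    ∑ v ∈ s, nsmulFamily d M v = M.sum fun v j => j • d v :=
  (Finsupp.sum_of_support_subset M hM (fun v j => j • d v) fun _ _ => zero_smul ℕ _).symm

theorem support_subset_of_sum_nsmul_eq (hs : ∀ v, d v ≤ E → v ∈ s) {M : ι →₀ ℕ}
    (hM : (M.sum fun v j => j • d v) = E) : M.support ⊆ s := fun v hv => hs v <| calc
  d v ≤ M v • d v := le_self_nsmul zero_le (Finsupp.mem_support_iff.mp hv)
  _ ≤ M.sum fun v j => j • d v :=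
    Finset.single_le_sum (f := fun v => M v • d v) (fun _ _ => zero_le) hv
  _ = E := hM

theorem nsmulFamily_mem_multiplesDecompositions (hs : ∀ v, d v ≤ E → v ∈ s) {M : ι →₀ ℕ}
    (hMJ : ∀ v, M v ∈ J v) (hME : (M.sum fun v j => j • d v) = E) :
    nsmulFamily d M ∈ multiplesDecompositions s J d E := by
  classical
  have hsupp := support_subset_of_sum_nsmul_eq hs hME
  refine mem_filter.mpr ⟨mem_finsuppAntidiag.mpr ⟨?_, ?_⟩, fun v _ => ⟨M v, hMJ v, rfl⟩⟩
  · rw [sum_nsmulFamily_of_support_subset hsupp, hME]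
  · exact Finsupp.support_onFinset_subset.trans hsupp

theorem eq_of_nsmulFamily_eq (hd : ∀ v ∈ s, d v ≠ 0) (hs : ∀ v, d v ≤ E → v ∈ s)
    {M M' : ι →₀ ℕ} (hME : (M.sum fun v j => j • d v) = E)
    (hME' : (M'.sum fun v j => j • d v) = E) (hMM' : nsmulFamily d M = nsmulFamily d M') :
    M = M' := by
  ext v
  by_cases hvs : v ∈ s
  · exact (nsmul_left_strictMono (pos_iff_ne_zero.mpr (hd v hvs))).injective
      (DFunLike.congr_fun hMM' v)
  · rw [Finsupp.notMem_support_iff.mp (mt (support_subset_of_sum_nsmul_eq hs hME ·) hvs),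
      Finsupp.notMem_support_iff.mp (mt (support_subset_of_sum_nsmul_eq hs hME' ·) hvs)]

theorem exists_nsmulFamily_eq (hJ : ∀ v, 0 ∈ J v) {u : ι →₀ σ →₀ ℕ}
    (hu : u ∈ multiplesDecompositions s J d E) :
    ∃ M : ι →₀ ℕ, ((∀ v, M v ∈ J v) ∧ (M.sum fun v j => j • d v) = E) ∧
      nsmulFamily d M = u := by
  classical
  obtain ⟨⟨hsum, hsupp⟩, hP⟩ := mem_filter.mp hu |>.imp_left mem_finsuppAntidiag.mp
  choose! j hjJ hju using hP
  have hu_eq : nsmulFamily d (Finsupp.indicator s fun v _ => j v) = u := by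
    ext1 v
    by_cases hvs : v ∈ s
    · simp [hvs, hju v hvs]
    · simp [hvs, Finsupp.notMem_support_iff.mp (mt (hsupp ·) hvs)]
  refine ⟨Finsupp.indicator s fun v _ => j v, ⟨fun v => ?_, ?_⟩, hu_eq⟩
  · by_cases hvs : v ∈ s
    · simpa [hvs] using hjJ v hvs
    · simpa [hvs] using hJ v
  · rw [← sum_nsmulFamily_of_support_subset (Finsupp.support_indicator_subset _ _), hu_eq, hsum]

theorem card_multiplesDecompositions (hJ : ∀ v, 0 ∈ J v) (hd : ∀ v ∈ s, d v ≠ 0)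
    (hs : ∀ v, d v ≤ E → v ∈ s) :
    #(multiplesDecompositions s J d E) =
      Nat.card {M : ι →₀ ℕ // (∀ v, M v ∈ J v) ∧ (M.sum fun v j => j • d v) = E} := by
  rw [← Nat.card_eq_finsetCard]
  refine (Nat.card_congr (Equiv.ofBijective
    (fun M => ⟨nsmulFamily d M.1, nsmulFamily_mem_multiplesDecompositions hs M.2.1 M.2.2⟩)
    ⟨fun M M' hMM' => ?_, fun u => ?_⟩)).symm
  · exact Subtype.ext (eq_of_nsmulFamily_eq hd hs M.2.2 M'.2.2 (congrArg Subtype.val hMM'))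
  · obtain ⟨M, hM, hMu⟩ := exists_nsmulFamily_eq hJ u.2
    exact ⟨⟨M, hM⟩, Subtype.ext hMu⟩

theorem coeff_prod_multiplesSeries [CommSemiring R] (hJ : ∀ v, 0 ∈ J v)
    (hd : ∀ v ∈ s, d v ≠ 0) (hs : ∀ v, d v ≤ E → v ∈ s) :
    coeff E (∏ v ∈ s, multiplesSeries (J v) (d v) : MvPowerSeries σ R) =
      Nat.card {M : ι →₀ ℕ // (∀ v, M v ∈ J v) ∧ (M.sum fun v j => j • d v) = E} := by
  classical
  rw [← card_multiplesDecompositions hJ hd hs, multiplesDecompositions]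
  simp only [coeff_prod, coeff_multiplesSeries, prod_boole, sum_boole]

end Decompositions

end MvPowerSeries

open MvPowerSeries

/-- The exponent of `x^{s+kl} y^{t+kl} q^{l+1}` for `p = (s, t)`: as in `fDim2`, `l` stands for
the paper's `l - 1`. -/
noncomputable def slotDegree (k l : ℕ) (p : ℕ × ℕ) : Fin 3 →₀ ℕ :=
  Finsupp.single 0 (p.1 + k * l) + Finsupp.single 1 (p.2 + k * l) + Finsupp.single 2 (l + 1)

@[simp]
theorem slotDegree_apply_zero (k l : ℕ) (p : ℕ × ℕ) : slotDegree k l p 0 = p.1 + k * l := by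
  simp [slotDegree]

@[simp]
theorem slotDegree_apply_one (k l : ℕ) (p : ℕ × ℕ) : slotDegree k l p 1 = p.2 + k * l := by
  simp [slotDegree]

@[simp]
theorem slotDegree_apply_two (k l : ℕ) (p : ℕ × ℕ) : slotDegree k l p 2 = l + 1 := by
  simp [slotDegree]

theorem slotDegree_ne_zero (k l : ℕ) (p : ℕ × ℕ) : slotDegree k l p ≠ 0 :=
  fun h => by simpa using DFunLike.congr_fun h 2

theorem monomial_slotDegree {R : Type*} [CommSemiring R] (k l : ℕ) (p : ℕ × ℕ) :
    monomial (slotDegree k l p) (1 : R) =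
      MvPowerSeries.X 0 ^ (p.1 + k * l) * MvPowerSeries.X 1 ^ (p.2 + k * l) *
        MvPowerSeries.X 2 ^ (l + 1) := by
  simp only [MvPowerSeries.X_pow_eq, MvPowerSeries.monomial_mul_monomial, mul_one, slotDegree]

def parityMultiplicities (p : ℕ × ℕ) : Set ℕ := {j | Odd (p.1 + p.2) → j ≤ 1}

theorem zero_mem_parityMultiplicities (p : ℕ × ℕ) : 0 ∈ parityMultiplicities p :=
  fun _ => zero_le_one

noncomputable def levelFactor (k l : ℕ) (p : ℕ × ℕ) : MvPowerSeries (Fin 3) ℤ :=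
  multiplesSeries (parityMultiplicities p) (slotDegree k l p)

theorem levelFactor_of_odd {k l : ℕ} {p : ℕ × ℕ} (hp : Odd (p.1 + p.2)) :
    levelFactor k l p =
      1 + MvPowerSeries.X 0 ^ (p.1 + k * l) * MvPowerSeries.X 1 ^ (p.2 + k * l) *
        MvPowerSeries.X 2 ^ (l + 1) := by
  have hJ : parityMultiplicities p = Set.Iic 1 :=
    Set.ext fun j => by simp [parityMultiplicities, hp]
  rw [levelFactor, hJ, ← monomial_slotDegree,
    one_add_monomial_eq_multiplesSeries (slotDegree_ne_zero k l p)]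

theorem one_sub_mul_levelFactor_of_even {k l : ℕ} {p : ℕ × ℕ} (hp : ¬Odd (p.1 + p.2)) :
    (1 - MvPowerSeries.X 0 ^ (p.1 + k * l) * MvPowerSeries.X 1 ^ (p.2 + k * l) *
        MvPowerSeries.X 2 ^ (l + 1)) * levelFactor k l p = 1 := by
  have hJ : parityMultiplicities p = Set.univ :=
    Set.ext fun j => by simp [parityMultiplicities, hp]
  rw [levelFactor, hJ, ← monomial_slotDegree,
    one_sub_monomial_mul_multiplesSeries_univ (slotDegree_ne_zero k l p)]

theorem rhsFactor2_succ (h : ℕ × ℕ →₀ ℕ) (k l : ℕ) :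
    rhsFactor2 h k (l + 1) = ∏ p ∈ h.support, levelFactor k l p ^ h p := by
  rw [rhsFactor2, ← prod_filter_mul_prod_filter_not h.support fun p => Odd (p.1 + p.2)]
  simp only [Nat.add_sub_cancel, Nat.not_odd_iff_even]
  congr 1
  · exact prod_congr rfl fun p hp => by rw [levelFactor_of_odd (mem_filter.mp hp).2]
  · refine Ring.inverse_eq_of_mul_eq_one ?_
    rw [← prod_mul_distrib]
    exact prod_eq_one fun p hp => by
      rw [← mul_pow, one_sub_mul_levelFactor_of_even
        (Nat.not_odd_iff_even.mpr (mem_filter.mp hp).2), one_pow]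

def basisFinset (h : ℕ × ℕ →₀ ℕ) : Finset (Σ p : ℕ × ℕ, Fin (h p)) :=
  h.support.sigma fun _ => univ

theorem mem_basisFinset {h : ℕ × ℕ →₀ ℕ} (w : Σ p : ℕ × ℕ, Fin (h p)) : w ∈ basisFinset h :=
  mem_sigma.mpr ⟨Finsupp.mem_support_iff.mpr (Nat.pos_iff_ne_zero.mp w.2.pos), mem_univ _⟩

theorem prod_Icc_rhsFactor2 (h : ℕ × ℕ →₀ ℕ) (k L : ℕ) :
    ∏ l ∈ Icc 1 L, rhsFactor2 h k l =
      ∏ v ∈ range L ×ˢ basisFinset h, levelFactor k v.1 v.2.1 := by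
  rw [← Ico_add_one_right_eq_Icc, prod_Ico_eq_prod_range, Nat.add_sub_cancel, prod_product]
  refine prod_congr rfl fun l _ => ?_
  rw [add_comm, rhsFactor2_succ, basisFinset, prod_sigma]
  simp only [prod_const, card_univ, Fintype.card_fin]

theorem sum_nsmul_slotDegree_eq_iff {ι : Type*} (k : ℕ) (l : ι → ℕ) (p : ι → ℕ × ℕ)
    (M : ι →₀ ℕ) (E : Fin 3 →₀ ℕ) :
    (M.sum fun v j => j • slotDegree k (l v) (p v)) = E ↔
      (M.sum fun v j => (l v + 1) * j) = E 2 ∧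
        (M.sum fun v j => j • (p v + (k * l v, k * l v))) = (E 0, E 1) := by
  rw [and_comm]
  simp [Finsupp.ext_iff, Fin.forall_fin_succ, Prod.ext_iff, Finsupp.sum, Prod.fst_sum,
    Prod.snd_sum, add_mul, mul_comm, and_assoc]

theorem hodge_series_delocalized_symmetric_product (h : ℕ × ℕ →₀ ℕ) (k : ℕ)
    (E : Fin 3 →₀ ℕ) :
    (fDim2 h k (E 2) (E 0, E 1) : ℤ) =
      MvPowerSeries.coeff (R := ℤ) E (∏ l ∈ Finset.Icc 1 (E 2), rhsFactor2 h k l) := by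
  have hs (v : ℕ × Σ p : ℕ × ℕ, Fin (h p)) (hv : slotDegree k v.1 v.2.1 ≤ E) :
      v ∈ range (E 2) ×ˢ basisFinset h :=
    mem_product.mpr ⟨mem_range.mpr (by simpa using hv 2), mem_basisFinset v.2⟩
  rw [prod_Icc_rhsFactor2]
  unfold levelFactor
  rw [coeff_prod_multiplesSeries (fun v => zero_mem_parityMultiplicities v.2.1)
    (fun v _ => slotDegree_ne_zero k v.1 v.2.1) hs, fDim2]
  exact congrArg _ <| Nat.card_congr <| Equiv.subtypeEquivRight fun M =>
    and_congr Iff.rfl (sum_nsmul_slotDegree_eq_iff k Prod.fst (fun v => v.2.1) M E).symm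
end

section
/- Let W = ⊕_{(s,t)∈ℕ×ℕ} W_{s,t} be a bigraded vector space over a field K of characteristic zero, with every W_{s,t} finite-dimensional and all but finitely many zero. Set χ = ∑_{s,t} (-1)^{s+t} h^{s,t}(W) (the Euler number) and σ = ∑_{s,t} (-1)^t h^{s,t}(W) (the signature χ_1), and let σ_n = ∑_{s,t} (-1)^t h^{s,t}(S^n(W)) be the signature of the n-th graded symmetric power. Then in ℚ[[q]] one has ( ∑_{n≥0} σ_n q^n )^2 · (1-q^2)^{χ} · (1-q)^{σ} = (1+q)^{σ}, where powers with integer exponents χ, σ ∈ ℤ are taken in the group of units of ℚ[[q]]. (Equivalently, ∑_n sign(X^{(n)}) q^n = (1-q^2)^{-χ(X)/2} ((1+q)/(1-q))^{sign(X)/2} for a compact complex manifold X.) -/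
/-!
In a homogeneous basis of `W`, the graded symmetric algebra `S^•(W)` is the tensor product of
the graded symmetric algebras of the basis lines, and the signature is multiplicative; hence
`∑ σ_n q^n` is the product over the basis of the signature series of a line of bidegree `(s, t)`:
`1 / (1 - (-1)^t q)` if `s + t` is even (a polynomial algebra) and `1 + (-1)^t q` if `s + t` is
odd (an exterior algebra). Each such factor `f` satisfies
`f^2 (1 - q^2)^((-1)^(s+t)) (1 - q)^((-1)^t) = (1 + q)^((-1)^t)`, and `χ`, `σ` are the sums of the
exponents `(-1)^(s+t)`, `(-1)^t` over the basis, so the identity is the product of these.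
-/

open PowerSeries Finset

/-- Dimension of the bidegree-`e` component of the `n`-th graded symmetric power of a
bigraded vector space whose bidegree-`p` component has dimension `h p`. -/
noncomputable def sDim2 (h : ℕ × ℕ →₀ ℕ) (n : ℕ) (e : ℕ × ℕ) : ℕ :=
  Nat.card {m : (Σ p : ℕ × ℕ, Fin (h p)) →₀ ℕ //
    (∀ v, Odd (v.1.1 + v.1.2) → m v ≤ 1) ∧ (m.sum fun _ k => k) = n ∧
      (m.sum fun v k => k • v.1) = e}

/-- The Euler number `χ = ∑_{s,t} (-1)^{s+t} h^{s,t}(W)`. -/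
noncomputable def eulerNum (h : ℕ × ℕ →₀ ℕ) : ℤ :=
  ∑ p ∈ h.support, (-1) ^ (p.1 + p.2) * (h p : ℤ)

/-- The signature `σ = χ_1 = ∑_{s,t} (-1)^t h^{s,t}(W)`. -/
noncomputable def signNum (h : ℕ × ℕ →₀ ℕ) : ℤ :=
  ∑ p ∈ h.support, (-1) ^ p.2 * (h p : ℤ)

theorem zpow_sum₀ {ι G₀ : Type*} [CommGroupWithZero G₀] {a : G₀} (ha : a ≠ 0)
    (s : Finset ι) (f : ι → ℤ) : a ^ (∑ i ∈ s, f i) = ∏ i ∈ s, a ^ f i := by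
  classical
  induction s using Finset.induction_on with
  | empty => simp
  | insert i s hi ih => rw [sum_insert hi, prod_insert hi, zpow_add₀ ha, ih]

section Evaluation

variable {K : Type*} [Field K]

noncomputable def lineFactor (x : K) (p : ℕ × ℕ) : K :=
  if Even (p.1 + p.2) then (1 - (-1) ^ p.2 * x)⁻¹ else 1 + (-1) ^ p.2 * x

theorem lineFactor_sq_mul {x : K} (h₁ : 1 - x ≠ 0) (h₂ : 1 + x ≠ 0) (p : ℕ × ℕ) :
    lineFactor x p ^ 2 * (1 - x ^ 2) ^ ((-1 : ℤ) ^ (p.1 + p.2)) *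
      (1 - x) ^ ((-1 : ℤ) ^ p.2) = (1 + x) ^ ((-1 : ℤ) ^ p.2) := by
  rw [show 1 - x ^ 2 = (1 - x) * (1 + x) by ring, lineFactor]
  rcases Nat.even_or_odd p.2 with ht | ht <;>
    rcases Nat.even_or_odd (p.1 + p.2) with hs | hs <;>
    simp [hs, Nat.not_even_iff_odd.2, ht.neg_one_pow, hs.neg_one_pow, ← sub_eq_add_neg] <;>
    field_simp

theorem prod_lineFactor_sq_mul {x : K} (h₁ : 1 - x ≠ 0) (h₂ : 1 + x ≠ 0) (h : ℕ × ℕ →₀ ℕ) :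
    (∏ p ∈ h.support, lineFactor x p ^ h p) ^ 2 * (1 - x ^ 2) ^ eulerNum h *
      (1 - x) ^ signNum h = (1 + x) ^ signNum h := by
  have h₃ : 1 - x ^ 2 ≠ 0 := by
    rw [show 1 - x ^ 2 = (1 - x) * (1 + x) by ring]; exact mul_ne_zero h₁ h₂
  simp only [eulerNum, signNum, zpow_sum₀ h₁, zpow_sum₀ h₂, zpow_sum₀ h₃, ← prod_pow,
    ← prod_mul_distrib]
  refine prod_congr rfl fun p _ => ?_
  simp only [zpow_mul, zpow_natCast, ← lineFactor_sq_mul h₁ h₂ p]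
  ring

end Evaluation

section LineSeries

variable (R : Type*) [CommRing R]

/-- The signature series of the graded symmetric algebra of a line of bidegree `p = (s, t)`:
the Hilbert series `1 / (1 - q)` of a polynomial algebra (`s + t` even) or `1 + q` of an exterior
algebra (`s + t` odd), with `q` weighted by `(-1)^t`. -/
noncomputable def lineSeries (p : ℕ × ℕ) : R⟦X⟧ :=
  rescale ((-1) ^ p.2) (if Even (p.1 + p.2) then mk 1 else 1 + X)

theorem coeff_lineSeries (p : ℕ × ℕ) (k : ℕ) :
    coeff k (lineSeries R p) = if Even (p.1 + p.2) ∨ k ≤ 1 then ((-1) ^ p.2) ^ k else 0 := by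
  by_cases hp : Even (p.1 + p.2)
  · simp [lineSeries, hp]
  · rcases k with _ | _ | k <;> simp [lineSeries, hp, coeff_one, -map_pow]

variable {R} {K : Type*} [Field K]

theorem map_lineSeries (φ : R⟦X⟧ →+* K) (p : ℕ × ℕ) :
    φ (lineSeries R p) = lineFactor (φ X) p := by
  by_cases hp : Even (p.1 + p.2)
  · have h := congrArg (φ ∘ rescale ((-1 : R) ^ p.2)) (mk_one_mul_one_sub_eq_one R)
    simp only [Function.comp_apply, map_mul, map_sub, map_one, rescale_X, map_pow, map_neg] at h
    simp [lineSeries, lineFactor, hp, eq_inv_of_mul_eq_one_left h]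
  · simp [lineSeries, lineFactor, hp, rescale_X]

end LineSeries

section SymmetricPower

variable (h : ℕ × ℕ →₀ ℕ)

abbrev HomBasis : Type := Σ p : ℕ × ℕ, Fin (h p)

noncomputable instance : Fintype (HomBasis h) :=
  ⟨h.support.sigma fun _ => univ, fun v => by simpa using (Fin.pos v.2).ne'⟩

theorem prod_homBasis {M : Type*} [CommMonoid M] (f : ℕ × ℕ → M) :
    ∏ v : HomBasis h, f v.1 = ∏ p ∈ h.support, f p ^ h p := by
  change ∏ v ∈ h.support.sigma fun _ => univ, f v.1 = _
  simp [prod_sigma]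

/-- Exponent vectors of the monomial basis of `S^n(W)`: odd basis vectors occur at most once. -/
noncomputable def symMonomials (n : ℕ) : Finset (HomBasis h →₀ ℕ) :=
  {m ∈ univ.finsuppAntidiag n | ∀ v, Odd (v.1.1 + v.1.2) → m v ≤ 1}

variable {h}

def bidegree (m : HomBasis h →₀ ℕ) : ℕ × ℕ := m.sum fun v k => k • v.1

theorem sDim2_eq_card (n : ℕ) (e : ℕ × ℕ) :
    sDim2 h n e = #{m ∈ symMonomials h n | bidegree m = e} := by
  rw [sDim2, ← Nat.card_eq_finsetCard]
  refine Nat.card_congr (Equiv.subtypeEquivRight fun m => ?_)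
  simp [symMonomials, mem_finsuppAntidiag, bidegree, Finsupp.sum_fintype]
  tauto

theorem tsum_neg_one_pow_mul_sDim2 (n : ℕ) :
    ∑' e : ℕ × ℕ, (-1 : ℚ) ^ e.2 * sDim2 h n e =
      ∑ m ∈ symMonomials h n, (-1) ^ (bidegree m).2 := by
  rw [sum_comp (fun e : ℕ × ℕ => (-1 : ℚ) ^ e.2) bidegree,
    tsum_eq_sum (s := (symMonomials h n).image bidegree)]
  · simp [sDim2_eq_card, mul_comm]
  · intro e he
    rw [sDim2_eq_card, card_eq_zero.2 (filter_eq_empty_iff.2 fun m hm hme =>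
      he (mem_image.2 ⟨m, hm, hme⟩)), CharP.cast_eq_zero, mul_zero]

theorem neg_one_pow_bidegree_snd {R : Type*} [CommRing R] (m : HomBasis h →₀ ℕ) :
    (-1 : R) ^ (bidegree m).2 = ∏ v, ((-1) ^ v.1.2) ^ m v := by
  rw [bidegree, Finsupp.sum, Prod.snd_sum, ← prod_pow_eq_pow_sum,
    ← Finsupp.prod_fintype _ _ fun _ => pow_zero _]
  simp [Finsupp.prod, ← pow_mul, mul_comm]

theorem coeff_prod_lineSeries {R : Type*} [CommRing R] (n : ℕ) :
    coeff n (∏ v : HomBasis h, lineSeries R v.1) =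
      ∑ m ∈ symMonomials h n, (-1 : R) ^ (bidegree m).2 := by
  calc coeff n (∏ v : HomBasis h, lineSeries R v.1)
      = ∑ m ∈ (univ : Finset (HomBasis h)).finsuppAntidiag n,
          ∏ v, coeff (m v) (lineSeries R v.1) := coeff_prod _ _ _
    _ = ∑ m ∈ symMonomials h n, ∏ v, coeff (m v) (lineSeries R v.1) := by
      refine (sum_filter_of_ne fun m _ hm v hv => ?_).symm
      by_contra hmv
      refine hm (prod_eq_zero (mem_univ v) ?_)
      rw [coeff_lineSeries, if_neg (not_or.2 ⟨Nat.not_even_iff_odd.2 hv, hmv⟩)]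
    _ = _ := sum_congr rfl fun m hm => by
      rw [neg_one_pow_bidegree_snd]
      refine prod_congr rfl fun v _ => ?_
      rw [coeff_lineSeries, if_pos ((Nat.even_or_odd _).imp_right ((mem_filter.1 hm).2 v))]

theorem mk_tsum_sDim2_eq_prod (h : ℕ × ℕ →₀ ℕ) :
    (mk fun n => ∑' e : ℕ × ℕ, (-1 : ℚ) ^ e.2 * (sDim2 h n e : ℚ)) =
      ∏ p ∈ h.support, lineSeries ℚ p ^ h p := by
  ext n
  rw [coeff_mk, tsum_neg_one_pow_mul_sDim2, ← coeff_prod_lineSeries, prod_homBasis]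

end SymmetricPower

theorem ofPowerSeries_ne_zero_of_constantCoeff_ne_zero {R : Type*} [Semiring R] {f : R⟦X⟧}
    (hf : constantCoeff f ≠ 0) : HahnSeries.ofPowerSeries ℤ R f ≠ 0 :=
  (map_ne_zero_iff _ HahnSeries.ofPowerSeries_injective).2
    (ne_of_apply_ne constantCoeff (by rwa [map_zero]))

theorem signature_generating_function_symmetric_products (h : ℕ × ℕ →₀ ℕ) :
    (((PowerSeries.mk fun n =>
          ∑' p : ℕ × ℕ, (-1 : ℚ) ^ p.2 * (sDim2 h n p : ℚ)) : PowerSeries ℚ) :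
        LaurentSeries ℚ) ^ 2 *
        (1 - ((PowerSeries.X : PowerSeries ℚ) : LaurentSeries ℚ) ^ 2) ^ (eulerNum h) *
        (1 - ((PowerSeries.X : PowerSeries ℚ) : LaurentSeries ℚ)) ^ (signNum h) =
      (1 + ((PowerSeries.X : PowerSeries ℚ) : LaurentSeries ℚ)) ^ (signNum h) := by
  rw [mk_tsum_sDim2_eq_prod, map_prod]
  simp only [map_pow, map_lineSeries]
  refine prod_lineFactor_sq_mul ?_ ?_ h
  · rw [← map_one (HahnSeries.ofPowerSeries ℤ ℚ), ← map_sub]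
    exact ofPowerSeries_ne_zero_of_constantCoeff_ne_zero (by simp)
  · rw [← map_one (HahnSeries.ofPowerSeries ℤ ℚ), ← map_add]
    exact ofPowerSeries_ne_zero_of_constantCoeff_ne_zero (by simp)
end

section
/- Let c ∈ ℚ. Then in ℚ[[q]] one has ∑_{n≥0} q^n ( ∑_N ∏_{l≥1} (1/N_l!) (c/l)^{N_l} ) = exp( c ∑_{m≥1} q^m/m ), where the inner sum is over all finitely supported functions N : {1,2,3,…} → ℕ with ∑_l l·N_l = n. In particular, for c ∈ ℕ the right-hand side equals (1-q)^{-c}. (This is Zagier's computation of the generating function ∑_n χ(X^{(n)}) q^n = (1-q)^{-χ(X)} for Euler numbers of symmetric products, via χ(X^{(n)}) = ∑_{∑ lN_l = n} χ(X)^{∑ N_l} / ∏ (N_l! l^{N_l}).) -/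
/-!
Both sides are the unique power series `F` with constant term `1` and `F' = L' F`, where
`L = ∑_{l ≥ 1} b_l q^l` (here `b_l = c / l`). For `exp L` this follows from
`(∑_{j ≤ m} L^j / j!)' = L' ∑_{j < m} L^j / j!`. For the partition sum `∑ a_n q^n` it is the
identity `n a_n = ∑_l l b_l a_{n-l}`: writing `n = ∑_l l N_l` and removing one part of size `l`
from `N` matches the term `l N_l w(N)` with `l b_l w(N - e_l)`, since `N_l w(N) = b_l w(N - e_l)`
for the weight `w(N) = ∏_l b_l^{N_l} / N_l!`.

For `c = d ∈ ℕ` we have `(1 - q) L' = d`, so `exp L · (1 - q)^d` has derivative zero and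
constant term `1`.
-/

open PowerSeries Finset

/-- The exponential of a formal power series (with zero constant term) over a
`ℚ`-algebra: `pexp f = ∑_{j≥0} f^j / j!`. -/
noncomputable def pexp {R : Type*} [CommRing R] [Algebra ℚ R] (f : PowerSeries R) :
    PowerSeries R :=
  PowerSeries.mk fun n =>
    ∑ j ∈ Finset.range (n + 1),
      algebraMap ℚ R (1 / j.factorial) * PowerSeries.coeff n (f ^ j)

open scoped Nat

section Exp

variable {R : Type*} [CommRing R] [Algebra ℚ R]

noncomputable def expPartialSum (m : ℕ) (g : R⟦X⟧) : R⟦X⟧ :=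
  ∑ j ∈ range m, (j ! : ℚ)⁻¹ • g ^ j

theorem coeff_pexp (g : R⟦X⟧) (n : ℕ) :
    coeff n (pexp g) = coeff n (expPartialSum (n + 1) g) := by
  simp only [pexp, expPartialSum, coeff_mk, map_sum, coeff_smul, one_div]
  simp only [Algebra.smul_def]

theorem coeff_pexp_of_lt {g : R⟦X⟧} (hg : constantCoeff g = 0) {n m : ℕ} (hm : n < m) :
    coeff n (pexp g) = coeff n (expPartialSum m g) := by
  simp only [coeff_pexp, expPartialSum, map_sum, coeff_smul]
  refine sum_subset (range_subset_range.2 hm) fun j _ hj => ?_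
  have : (n : ℕ∞) < j := by simpa using hj
  rw [coeff_of_lt_order n (this.trans_le (le_order_pow_of_constantCoeff_eq_zero j hg)),
    smul_zero]

theorem constantCoeff_pexp (g : R⟦X⟧) : constantCoeff (pexp g) = 1 := by
  simp [← coeff_zero_eq_constantCoeff_apply, coeff_pexp, expPartialSum]

theorem derivative_expPartialSum_succ (m : ℕ) (g : R⟦X⟧) :
    d⁄dX R (expPartialSum (m + 1) g) = d⁄dX R g * expPartialSum m g := by
  rw [expPartialSum, sum_range_succ', expPartialSum, mul_sum]
  simp only [pow_zero, map_add, map_sum, Derivation.map_smul_of_tower,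
    Derivation.map_one_eq_zero, smul_zero, add_zero]
  refine sum_congr rfl fun j _ => ?_
  rw [derivative_pow, Nat.add_sub_cancel, mul_assoc, ← nsmul_eq_mul,
    ← Nat.cast_smul_eq_nsmul ℚ, smul_smul, mul_smul_comm, mul_comm (d⁄dX R g)]
  congr 1
  rw [Nat.factorial_succ, Nat.cast_mul]
  field_simp

theorem derivative_pexp {g : R⟦X⟧} (hg : constantCoeff g = 0) :
    d⁄dX R (pexp g) = d⁄dX R g * pexp g := by
  ext n
  have hmul : coeff n (d⁄dX R g * pexp g) = coeff n (d⁄dX R g * expPartialSum (n + 1) g) := by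
    simp only [coeff_mul]
    refine sum_congr rfl fun p hp => ?_
    rw [coeff_pexp_of_lt hg (Nat.antidiagonal.snd_lt hp)]
  rw [hmul, ← derivative_expPartialSum_succ, coeff_derivative, coeff_derivative,
    coeff_pexp_of_lt hg (Nat.lt_succ_self _)]

end Exp

theorem PowerSeries.eq_of_derivative_eq_mul {R : Type*} [CommRing R] [IsAddTorsionFree R]
    {u F G : R⟦X⟧} (hF : d⁄dX R F = u * F) (hG : d⁄dX R G = u * G)
    (h0 : constantCoeff F = constantCoeff G) : F = G := by
  ext n
  induction n using Nat.strong_induction_on with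
  | _ n ih =>
    cases n with
    | zero => simpa using h0
    | succ n =>
      have h : coeff n (d⁄dX R F) = coeff n (d⁄dX R G) := by
        rw [hF, hG, coeff_mul, coeff_mul]
        exact sum_congr rfl fun p hp => by rw [ih p.2 (Nat.antidiagonal.snd_lt hp)]
      rw [coeff_derivative, coeff_derivative, ← Nat.cast_succ, ← nsmul_eq_mul',
        ← nsmul_eq_mul'] at h
      exact nsmul_right_injective n.succ_ne_zero h

section Partitions

noncomputable def partitionMultiplicities (n : ℕ) : Finset (ℕ →₀ ℕ) :=
  ((range (n + 1)).finsupp fun _ => range (n + 1)).filter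
    fun N => N 0 = 0 ∧ Finsupp.weight id N = n

theorem le_weight_id_of_mem_support {N : ℕ →₀ ℕ} {l : ℕ} (hl : l ∈ N.support) :
    l ≤ Finsupp.weight id N := by
  rw [← Finsupp.weight_sub_single_add (Finsupp.mem_support_iff.1 hl)]
  exact Nat.le_add_left _ _

theorem mem_partitionMultiplicities {n : ℕ} {N : ℕ →₀ ℕ} :
    N ∈ partitionMultiplicities n ↔ N 0 = 0 ∧ Finsupp.weight id N = n := by
  refine ⟨fun h => (mem_filter.1 h).2,
    fun h => mem_filter.2 ⟨mem_finsupp_iff.2 ⟨?_, ?_⟩, h⟩⟩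
  · intro l hl
    exact mem_range.2 (Nat.lt_succ_of_le (h.2 ▸ le_weight_id_of_mem_support hl))
  · intro l _
    rcases eq_or_ne l 0 with rfl | hl
    · simp [h.1]
    · exact mem_range.2 (Nat.lt_succ_of_le (h.2 ▸ Finsupp.le_weight id hl N))

theorem partitionMultiplicities_zero : partitionMultiplicities 0 = {0} := by
  ext N
  rw [mem_partitionMultiplicities, mem_singleton]
  refine ⟨fun ⟨h0, hw⟩ => ?_, by rintro rfl; simp⟩
  by_contra hN
  obtain ⟨l, hl⟩ := Finsupp.support_nonempty_iff.2 hN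
  have := le_weight_id_of_mem_support hl
  have : l ≠ 0 := by rintro rfl; exact Finsupp.mem_support_iff.1 hl h0
  omega

theorem sum_mul_eq_weight_id (N : ℕ →₀ ℕ) :
    (N.sum fun l k => l * k) = Finsupp.weight id N := by
  simp [Finsupp.weight_apply, mul_comm]

theorem tsum_subtype_eq_sum_partitionMultiplicities {M : Type*} [AddCommMonoid M]
    [TopologicalSpace M] (n : ℕ) (f : (ℕ →₀ ℕ) → M) :
    ∑' N : {N : ℕ →₀ ℕ // N 0 = 0 ∧ (N.sum fun l k => l * k) = n}, f N =
      ∑ N ∈ partitionMultiplicities n, f N := by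
  let e : {N : ℕ →₀ ℕ // N 0 = 0 ∧ (N.sum fun l k => l * k) = n} ≃
      {N // N ∈ partitionMultiplicities n} :=
    Equiv.subtypeEquivRight fun N => by rw [mem_partitionMultiplicities, sum_mul_eq_weight_id]
  rw [← Finset.tsum_subtype, ← e.tsum_eq]
  rfl

variable {K : Type*} [Field K]

noncomputable def partitionWeight (b : ℕ → K) (N : ℕ →₀ ℕ) : K :=
  N.prod fun l k => (k ! : K)⁻¹ * b l ^ k

theorem partitionWeight_zero (b : ℕ → K) : partitionWeight b 0 = 1 :=
  Finsupp.prod_zero_index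

theorem natCast_succ_mul_partitionWeight_add_single [CharZero K] (b : ℕ → K)
    (N : ℕ →₀ ℕ) (l : ℕ) :
    ((N l + 1 : ℕ) : K) * partitionWeight b (N + Finsupp.single l 1) =
      b l * partitionWeight b N := by
  have h0 : ∀ i, ((0 ! : ℕ) : K)⁻¹ * b i ^ 0 = 1 := by simp
  rw [partitionWeight, partitionWeight, ← Finsupp.mul_prod_erase' _ l _ h0,
    ← Finsupp.mul_prod_erase' N l _ h0, Finsupp.erase_add, Finsupp.erase_single, add_zero,
    Finsupp.add_apply, Finsupp.single_eq_same, Nat.factorial_succ, Nat.cast_mul, pow_succ]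
  field_simp

theorem sum_sigma_antidiagonal_eq_sum_sigma_support [CharZero K] (b : ℕ → K) (n : ℕ) :
    ∑ y ∈ (antidiagonal n).sigma fun p => partitionMultiplicities p.2,
        ((y.1.1 + 1 : ℕ) : K) * b (y.1.1 + 1) * partitionWeight b y.2 =
      ∑ x ∈ (partitionMultiplicities (n + 1)).sigma fun N => N.support,
        ((x.2 * x.1 x.2 : ℕ) : K) * partitionWeight b x.1 := by
  refine sum_nbij' (fun y => ⟨y.2 + Finsupp.single (y.1.1 + 1) 1, y.1.1 + 1⟩)
    (fun x => ⟨(x.2 - 1, n + 1 - x.2), x.1 - Finsupp.single x.2 1⟩) ?_ ?_ ?_ ?_ ?_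
  · rintro ⟨⟨i, j⟩, N⟩ hy
    simp only [mem_sigma, HasAntidiagonal.mem_antidiagonal, mem_partitionMultiplicities]
      at hy ⊢
    obtain ⟨hij, hN0, hNw⟩ := hy
    simp [hN0, hNw, Finsupp.weight_single]
    omega
  · rintro ⟨N, l⟩ hx
    simp only [mem_sigma, HasAntidiagonal.mem_antidiagonal, mem_partitionMultiplicities]
      at hx ⊢
    obtain ⟨⟨hN0, hNw⟩, hl⟩ := hx
    have hl0 : l ≠ 0 := by rintro rfl; exact Finsupp.mem_support_iff.1 hl hN0
    have hw := Finsupp.weight_sub_single_add (w := id) (Finsupp.mem_support_iff.1 hl)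
    rw [id_eq, hNw] at hw
    refine ⟨by omega, by simp [hN0], by omega⟩
  · rintro ⟨⟨i, j⟩, N⟩ hy
    simp only [mem_sigma, HasAntidiagonal.mem_antidiagonal] at hy
    simp only [add_tsub_cancel_right, Sigma.mk.injEq, Prod.mk.injEq, heq_eq_eq, true_and,
      and_true]
    omega
  · rintro ⟨N, l⟩ hx
    simp only [mem_sigma, mem_partitionMultiplicities] at hx
    obtain ⟨⟨hN0, -⟩, hl⟩ := hx
    have hl0 : l ≠ 0 := by rintro rfl; exact Finsupp.mem_support_iff.1 hl hN0
    simp only [Nat.sub_add_cancel (Nat.one_le_iff_ne_zero.2 hl0),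
      Finsupp.sub_add_single_one_cancel (Finsupp.mem_support_iff.1 hl)]
  · rintro ⟨⟨i, j⟩, N⟩ -
    simp only [Finsupp.add_apply, Finsupp.single_eq_same, Nat.cast_mul, mul_assoc,
      natCast_succ_mul_partitionWeight_add_single]

noncomputable def partitionSeries (b : ℕ → K) : K⟦X⟧ :=
  mk fun n => ∑ N ∈ partitionMultiplicities n, partitionWeight b N

theorem constantCoeff_partitionSeries (b : ℕ → K) : constantCoeff (partitionSeries b) = 1 := by
  rw [← coeff_zero_eq_constantCoeff_apply, partitionSeries, coeff_mk,
    partitionMultiplicities_zero, sum_singleton, partitionWeight_zero]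

theorem derivative_partitionSeries [CharZero K] (b : ℕ → K) :
    d⁄dX K (partitionSeries b) =
      d⁄dX K (mk fun m => if m = 0 then 0 else b m) * partitionSeries b := by
  ext n
  calc coeff n (d⁄dX K (partitionSeries b))
      = ∑ N ∈ partitionMultiplicities (n + 1), ((n + 1 : ℕ) : K) * partitionWeight b N := by
        rw [coeff_derivative, partitionSeries, coeff_mk, sum_mul, Nat.cast_succ]
        simp only [mul_comm]
    _ = ∑ x ∈ (partitionMultiplicities (n + 1)).sigma fun N => N.support,
          ((x.2 * x.1 x.2 : ℕ) : K) * partitionWeight b x.1 := by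
        rw [sum_sigma]
        refine sum_congr rfl fun N hN => ?_
        dsimp only
        rw [← sum_mul, ← Nat.cast_sum, ← (mem_partitionMultiplicities.1 hN).2,
          Finsupp.weight_apply, Finsupp.sum]
        simp only [id, smul_eq_mul, mul_comm]
    _ = ∑ y ∈ (antidiagonal n).sigma fun p => partitionMultiplicities p.2,
          ((y.1.1 + 1 : ℕ) : K) * b (y.1.1 + 1) * partitionWeight b y.2 :=
        (sum_sigma_antidiagonal_eq_sum_sigma_support b n).symm
    _ = coeff n (d⁄dX K (mk fun m => if m = 0 then 0 else b m) * partitionSeries b) := by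
        rw [sum_sigma, coeff_mul]
        refine sum_congr rfl fun p _ => ?_
        rw [coeff_derivative, coeff_mk, if_neg p.1.succ_ne_zero, partitionSeries, coeff_mk,
          mul_sum]
        exact sum_congr rfl fun _ _ => by push_cast; ring

theorem partitionSeries_eq_pexp [CharZero K] (b : ℕ → K) :
    partitionSeries b = pexp (mk fun m => if m = 0 then 0 else b m) :=
  PowerSeries.eq_of_derivative_eq_mul (derivative_partitionSeries b)
    (derivative_pexp (by simp [← coeff_zero_eq_constantCoeff_apply]))
    (by rw [constantCoeff_partitionSeries, constantCoeff_pexp])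

end Partitions

theorem PowerSeries.one_sub_X_mul_derivative_one_sub_X_pow {R : Type*} [CommRing R] (k : ℕ) :
    (1 - X) * d⁄dX R ((1 - X : R⟦X⟧) ^ k) = -(k : R⟦X⟧) * (1 - X) ^ k := by
  cases k with
  | zero => simp
  | succ k =>
    rw [derivative_pow, Nat.add_sub_cancel, map_sub, derivative_one, derivative_X, pow_succ]
    ring

section OneSubXPow

variable {K : Type*} [Field K] [CharZero K]

theorem derivative_mk_div (c : K) :
    d⁄dX K (mk fun m => if m = 0 then 0 else c / m) = mk fun _ => c := by
  ext n
  rw [coeff_derivative, coeff_mk, coeff_mk, if_neg n.succ_ne_zero]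
  push_cast
  field_simp

theorem one_sub_X_mul_derivative_mk_div (c : K) :
    (1 - X) * d⁄dX K (mk fun m => if m = 0 then 0 else c / m) = C c := by
  ext n
  rw [derivative_mk_div]
  cases n with
  | zero => simp
  | succ n => simp [sub_mul, coeff_succ_X_mul]

theorem pexp_mul_one_sub_X_pow (k : ℕ) :
    pexp (mk fun m => if m = 0 then 0 else (k : K) / m) * (1 - X) ^ k = 1 := by
  set L : K⟦X⟧ := mk fun m => if m = 0 then 0 else (k : K) / m
  have hL : constantCoeff L = 0 := by
    rw [← coeff_zero_eq_constantCoeff_apply, coeff_mk, if_pos rfl]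
  have hD : (1 - X) * d⁄dX K (pexp L * (1 - X) ^ k) = 0 := by
    calc (1 - X) * d⁄dX K (pexp L * (1 - X) ^ k)
        = pexp L * ((1 - X) * d⁄dX K ((1 - X) ^ k))
            + (1 - X) ^ k * ((1 - X) * d⁄dX K L) * pexp L := by
          rw [Derivation.leibniz, derivative_pexp hL, smul_eq_mul, smul_eq_mul]
          ring
      _ = 0 := by
          rw [one_sub_X_mul_derivative_one_sub_X_pow, one_sub_X_mul_derivative_mk_div,
            map_natCast]
          ring
  have hunit : IsUnit (1 - X : K⟦X⟧) := isUnit_iff_constantCoeff.2 (by simp)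
  refine derivative.ext ?_ ?_
  · rw [hunit.mul_right_eq_zero.1 hD, derivative_one]
  · simp [constantCoeff_pexp]

end OneSubXPow

theorem euler_numbers_symmetric_products (c : ℚ) :
    ((PowerSeries.mk fun n =>
        ∑' N : {N : ℕ →₀ ℕ // N 0 = 0 ∧ (N.sum fun l k => l * k) = n},
          (∏ l ∈ N.1.support, ((N.1 l).factorial : ℚ)⁻¹ * (c / l) ^ (N.1 l))
        : PowerSeries ℚ) =
      pexp (PowerSeries.mk fun m => if m = 0 then 0 else c / m)) ∧
    ∀ d : ℕ, c = d →
      pexp (PowerSeries.mk fun m => if m = 0 then 0 else c / m) *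
          (1 - (PowerSeries.X : PowerSeries ℚ)) ^ d = 1 := by
  refine ⟨?_, ?_⟩
  · calc _ = partitionSeries fun l : ℕ => c / l := by
          ext n
          rw [coeff_mk, partitionSeries, coeff_mk]
          exact tsum_subtype_eq_sum_partitionMultiplicities n (partitionWeight fun l : ℕ => c / l)
      _ = _ := partitionSeries_eq_pexp _
  · rintro d rfl
    exact pexp_mul_one_sub_X_pow d
end
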